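/- arXiv:math/0210257 — 3 statements merged into one kernel-verified Lean document; each statement's English description precedes it below -/
import Mathlib

section
/- Let χ: ℝ → [0,1] be a smooth function with χ(s) = 0 for s ≤ 1 and χ(s) = 1 for s ≥ 4. Fix real numbers 0 < r < ε₁ and a complex number t with |t| = r². Let f, g: ℂ → ℂ be smooth functions with f(0) = g(0). Define F on the annulus {z ∈ ℂ : r²/ε₁ < |z| < ε₁} by F(z) = f(χ(|z/r|²)·z) for r ≤ |z| < ε₁ and F(z) = g(χ(|t/(z·r)|²)·(t/z)) for r²/ε₁ < |z| ≤ r. Then F is smooth. -/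
/-- Gluing lemma for the smoothing-of-nodes construction:
the function `F` defined by the two cutoff branches on the annulus
`r²/ε₁ < |z| < ε₁` is smooth. -/
theorem stmt_0
    (χ : ℝ → ℝ) (hχ_smooth : ContDiff ℝ (⊤ : ℕ∞) χ)
    (hχ_range : ∀ s : ℝ, χ s ∈ Set.Icc (0:ℝ) 1)
    (hχ0 : ∀ s : ℝ, s ≤ 1 → χ s = 0)
    (hχ1 : ∀ s : ℝ, 4 ≤ s → χ s = 1)
    (r ε₁ : ℝ) (hr : 0 < r) (hrε : r < ε₁)
    (t : ℂ) (ht : ‖t‖ = r ^ 2)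
    (f g : ℂ → ℂ) (hf : ContDiff ℝ (⊤ : ℕ∞) f) (hg : ContDiff ℝ (⊤ : ℕ∞) g) (hfg : f 0 = g 0)
    (F : ℂ → ℂ)
    (hF₁ : ∀ z : ℂ, r ≤ ‖z‖ → ‖z‖ < ε₁ →
      F z = f ((χ ((‖z‖ / r) ^ 2)) • z))
    (hF₂ : ∀ z : ℂ, r ^ 2 / ε₁ < ‖z‖ → ‖z‖ ≤ r →
      F z = g ((χ (‖t / (z * (r : ℂ))‖ ^ 2)) • (t / z))) :
    ContDiffOn ℝ (⊤ : ℕ∞) F {z : ℂ | r ^ 2 / ε₁ < ‖z‖ ∧ ‖z‖ < ε₁} := by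
  have hε : (0:ℝ) < ε₁ := hr.trans hrε
  have hrC : (r : ℂ) ≠ 0 := Complex.ofReal_ne_zero.mpr hr.ne'
  set H : ℂ → ℂ := fun z =>
    f ((χ ((‖z‖ / r) ^ 2)) • z)
      + g ((χ ((‖t / (z * (r : ℂ))‖) ^ 2)) • (t / z)) - f 0 with hH
  have hsub : {z : ℂ | r ^ 2 / ε₁ < ‖z‖ ∧ ‖z‖ < ε₁}
      ⊆ {z : ℂ | z ≠ 0} := by
    intro z hz h
    have h1 := hz.1
    rw [h, norm_zero] at h1
    exact absurd h1 (not_lt.2 (div_pos (pow_pos hr 2) hε).le)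
  -- abs of t/(z*r) computed
  have habs : ∀ z : ℂ, z ≠ 0 → ‖t / (z * (r : ℂ))‖ = r / ‖z‖ := by
    intro z hz
    have hza : ‖z‖ ≠ 0 := by
      simpa using hz
    rw [norm_div, norm_mul, Complex.norm_real, Real.norm_eq_abs, abs_of_pos hr, ht]
    field_simp
  -- F = H on the annulus
  have hEq : Set.EqOn F H {z : ℂ | r ^ 2 / ε₁ < ‖z‖ ∧ ‖z‖ < ε₁} := by
    intro z hz
    obtain ⟨hz1, hz2⟩ := hz
    have hz0 : z ≠ 0 := hsub ⟨hz1, hz2⟩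
    have hza : (0:ℝ) < ‖z‖ := norm_pos_iff.mpr hz0
    rcases le_or_gt r (‖z‖) with hcase | hcase
    · -- outer branch; inner cutoff vanishes
      have h1 : (‖t / (z * (r : ℂ))‖) ^ 2 ≤ 1 := by
        rw [habs z hz0]
        have : r / ‖z‖ ≤ 1 := (div_le_one hza).2 hcase
        nlinarith [div_nonneg hr.le hza.le]
      rw [hF₁ z hcase hz2, hH]
      simp only [hχ0 _ h1, zero_smul, ← hfg]
      ring
    · -- inner branch; outer cutoff vanishes
      have h1 : (‖z‖ / r) ^ 2 ≤ 1 := by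
        have : ‖z‖ / r ≤ 1 := (div_le_one hr).2 hcase.le
        nlinarith [div_nonneg hza.le hr.le]
      rw [hF₂ z hz1 hcase.le, hH]
      simp only [hχ0 _ h1, zero_smul, hfg]
      ring
  -- H is smooth away from 0
  have hopen : IsOpen {z : ℂ | z ≠ 0} := isOpen_ne
  have hnormsq : ContDiff ℝ (⊤ : ℕ∞) (fun z : ℂ => (‖z‖ / r) ^ 2) := by
    have : (fun z : ℂ => (‖z‖ / r) ^ 2) = fun z : ℂ => ‖z‖ ^ 2 / r ^ 2 := by
      funext z
      rw [div_pow]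
    rw [this]
    exact (contDiff_norm_sq ℝ).div_const _
  have h1 : ContDiff ℝ (⊤ : ℕ∞) (fun z : ℂ => f ((χ ((‖z‖ / r) ^ 2)) • z)) :=
    hf.comp ((hχ_smooth.comp hnormsq).smul contDiff_id)
  have hquot : ContDiffOn ℝ (⊤ : ℕ∞) (fun z : ℂ => t / (z * (r : ℂ))) {z : ℂ | z ≠ 0} := by
    have : (fun z : ℂ => t / (z * (r : ℂ))) = fun z : ℂ => t * (z * (r : ℂ))⁻¹ := by
      funext z; rw [div_eq_mul_inv]
    rw [this]
    exact contDiffOn_const.mul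
      (ContDiffOn.inv (contDiffOn_id.mul contDiffOn_const) (fun z hz => mul_ne_zero hz hrC))
  have h2 : ContDiffOn ℝ (⊤ : ℕ∞)
      (fun z : ℂ => g ((χ ((‖t / (z * (r : ℂ))‖) ^ 2)) • (t / z)))
      {z : ℂ | z ≠ 0} := by
    apply hg.comp_contDiffOn
    apply ContDiffOn.smul (f := fun z : ℂ => χ (‖t / (z * (r : ℂ))‖ ^ 2)) (g := fun z : ℂ => t / z)
    · apply hχ_smooth.comp_contDiffOn
      have : (fun z : ℂ => (‖t / (z * (r : ℂ))‖) ^ 2)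
          = (fun w : ℂ => ‖w‖ ^ 2) ∘ (fun z : ℂ => t / (z * (r : ℂ))) := by
        funext z
        rfl
      rw [this]
      exact (contDiff_norm_sq ℝ).comp_contDiffOn hquot
    · exact (contDiffOn_const.mul (ContDiffOn.inv contDiffOn_id (fun z hz => hz))).congr
        (fun z _ => div_eq_mul_inv t z)
  have hHsmooth : ContDiffOn ℝ (⊤ : ℕ∞) H {z : ℂ | z ≠ 0} :=
    ((h1.contDiffOn.add h2).sub contDiffOn_const)
  exact (hHsmooth.mono hsub).congr hEq
end

section
/- Let (a_n)_{n≥0} be a sequence of nonnegative reals, b ≥ 0, and C > 0, satisfying a_{n+1} ≤ C(b + Σ_{k=0}^{n} a_k)·a_n for all n ≥ 0. If a₀ ≤ 1/(6C) and b ≤ 1/(6C), then a_{n+1} ≤ (1/2)·a_n for all n ≥ 0; in particular Σ_{k=0}^{∞} a_k ≤ 2a₀ and a_n → 0. -/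
/-!
If `a (n + 1) ≤ q * a n` is known whenever the partial sum `S n = ∑_{k ≤ n} a k` satisfies
`(1 - q) * S n ≤ a 0`, then the quantity `(1 - q) * S n + q * a n` never exceeds `a 0`: it equals
`a 0` at `n = 0` and it does not increase, since passing to `n + 1` changes it by
`a (n + 1) - q * a n ≤ 0`. So the hypothesis is met at every step. For the Newton recurrence with
`q = 1/2`, the bound `S n ≤ 2 a₀` makes the factor `C (b + S n)` at most `C · 3/(6C) = 1/2`.
-/

open Finset

section Bootstrap

variable {a : ℕ → ℝ} {q : ℝ}

theorem mul_sum_range_succ_add_le (ha : ∀ n, 0 ≤ a n) (hq : 0 ≤ q)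
    (hstep : ∀ n, (1 - q) * ∑ k ∈ range (n + 1), a k ≤ a 0 → a (n + 1) ≤ q * a n) (n : ℕ) :
    (1 - q) * ∑ k ∈ range (n + 1), a k + q * a n ≤ a 0 := by
  induction n with
  | zero => simp only [zero_add, range_one, sum_singleton]; linarith
  | succ m ih =>
    have hnext := hstep m (by linarith [mul_nonneg hq (ha m)])
    rw [sum_range_succ, mul_add]
    linarith

theorem le_mul_of_sum_range_bootstrap (ha : ∀ n, 0 ≤ a n) (hq : 0 ≤ q)
    (hstep : ∀ n, (1 - q) * ∑ k ∈ range (n + 1), a k ≤ a 0 → a (n + 1) ≤ q * a n) (n : ℕ) :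
    a (n + 1) ≤ q * a n :=
  hstep n (by linarith [mul_sum_range_succ_add_le ha hq hstep n, mul_nonneg hq (ha n)])

theorem mul_sum_range_le_of_bootstrap (ha : ∀ n, 0 ≤ a n) (hq : 0 ≤ q)
    (hstep : ∀ n, (1 - q) * ∑ k ∈ range (n + 1), a k ≤ a 0 → a (n + 1) ≤ q * a n) (n : ℕ) :
    (1 - q) * ∑ k ∈ range n, a k ≤ a 0 := by
  cases n with
  | zero => simpa using ha 0
  | succ m => linarith [mul_sum_range_succ_add_le ha hq hstep m, mul_nonneg hq (ha m)]

end Bootstrap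

theorem stmt_9_general (a : ℕ → ℝ) (b C : ℝ)
    (ha : ∀ n, 0 ≤ a n) (hC : 0 < C)
    (hrec : ∀ n, a (n + 1) ≤ C * (b + ∑ k ∈ Finset.range (n + 1), a k) * a n)
    (h0 : a 0 ≤ 1 / (6 * C)) (hb' : b ≤ 1 / (6 * C)) :
    (∀ n, a (n + 1) ≤ (1 / 2) * a n) ∧
    (∑' k, a k) ≤ 2 * a 0 ∧
    Filter.Tendsto a Filter.atTop (nhds 0) := by
  have hstep : ∀ n, (1 - 1 / 2) * ∑ k ∈ range (n + 1), a k ≤ a 0 →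
      a (n + 1) ≤ 1 / 2 * a n := by
    intro n hS
    have hfactor : C * (b + ∑ k ∈ range (n + 1), a k) ≤ 1 / 2 :=
      calc C * (b + ∑ k ∈ range (n + 1), a k) ≤ C * (1 / (6 * C) + 2 * (1 / (6 * C))) := by
            gcongr; linarith
        _ = 1 / 2 := by field_simp; norm_num
    exact (hrec n).trans (mul_le_mul_of_nonneg_right hfactor (ha n))
  have hsum (n : ℕ) : ∑ k ∈ range n, a k ≤ 2 * a 0 := by
    linarith [mul_sum_range_le_of_bootstrap ha (by norm_num) hstep n]
  have hsummable : Summable a := summable_of_sum_range_le ha hsum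
  exact ⟨le_mul_of_sum_range_bootstrap ha (by norm_num) hstep,
    hsummable.tsum_le_of_sum_range_le hsum, hsummable.tendsto_atTop_zero⟩

/-- Newton-iteration convergence lemma: if `(aₙ)` are
nonnegative, `b ≥ 0`, `C > 0`, `a_{n+1} ≤ C(b + Σ_{k=0}^{n} a_k)·aₙ` for all
`n`, and `a₀ ≤ 1/(6C)`, `b ≤ 1/(6C)`, then `a_{n+1} ≤ (1/2)aₙ` for all `n`;
in particular `Σ_{k=0}^{∞} a_k ≤ 2a₀` and `aₙ → 0`. -/
theorem stmt_9 (a : ℕ → ℝ) (b C : ℝ)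
    (ha : ∀ n, 0 ≤ a n) (hb : 0 ≤ b) (hC : 0 < C)
    (hrec : ∀ n, a (n + 1) ≤ C * (b + ∑ k ∈ Finset.range (n + 1), a k) * a n)
    (h0 : a 0 ≤ 1 / (6 * C)) (hb' : b ≤ 1 / (6 * C)) :
    (∀ n, a (n + 1) ≤ (1 / 2) * a n) ∧
    (∑' k, a k) ≤ 2 * a 0 ∧
    Filter.Tendsto a Filter.atTop (nhds 0) :=
  stmt_9_general a b C ha hC hrec h0 hb'
end

section
/- Let h: A → ℂ be defined on the annulus A(r²/ε₁, ε₁) by h(u,v) = f(χ((u²+v²)/r²)·(u+iv)) for r² ≤ u²+v² < ε₁² and h(u,v) = g(χ(r²/(u²+v²))·(t/(u+iv))) for r⁴/ε₁² < u²+v² ≤ r², where |t| = r², f,g: ℂ → ℂ are C¹, f(0)=g(0), and χ is a smooth cutoff with 0 ≤ χ' ≤ 1, χ = 0 on (−∞,1], χ = 1 on [4,∞). Then max over the annulus A(r/2, 2r) of |h| equals max{max_{D_{2r}}|f|, max_{D_{2r}}|g|}, and max over A(r/2, 2r) of |∇h| ≤ 9√2·max{max_{D_{2r}}|f'|, 4·max_{D_{2r}}|g'|}.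 -/
open Metric

set_option maxHeartbeats 1000000 in
private lemma biSup_le_aux {α : Type*} {s : Set α} {F : α → ℝ} {a : ℝ} (ha : 0 ≤ a)
    (hF : ∀ z ∈ s, F z ≤ a) : (⨆ z ∈ s, F z) ≤ a :=
  Real.iSup_le (fun z => Real.iSup_le (fun hz => hF z hz) ha) ha

private lemma le_biSup_aux {α : Type*} {s : Set α} {F : α → ℝ} {C : ℝ}
    (hC : ∀ z ∈ s, F z ≤ C) {z : α} (hz : z ∈ s) : F z ≤ ⨆ z ∈ s, F z := by
  have hb : BddAbove (Set.range fun z => ⨆ _ : z ∈ s, F z) := by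
    refine ⟨max C 0, ?_⟩
    rintro x ⟨y, rfl⟩
    exact Real.iSup_le (fun hy => (hC y hy).trans (le_max_left _ _)) (le_max_right _ _)
  refine le_ciSup_of_le hb z ?_
  rw [ciSup_pos hz]

private lemma biSup_nonneg_aux {α : Type*} {s : Set α} {F : α → ℝ} (hF : ∀ z, 0 ≤ F z) :
    0 ≤ ⨆ z ∈ s, F z :=
  Real.iSup_nonneg fun z => Real.iSup_nonneg fun _ => hF z
set_option maxHeartbeats 2000000 in
/-- Sup and gradient estimates for the glued map `h` on the
middle annulus `A(r/2, 2r)`: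
`max_{A(r/2,2r)} |h| = max{max_{D_{2r}}|f|, max_{D_{2r}}|g|}` and
`max_{A(r/2,2r)} |∇h| ≤ 9√2 · max{max_{D_{2r}}|f'|, 4·max_{D_{2r}}|g'|}`. -/
theorem stmt_11
    (r ε₁ : ℝ) (hr : 0 < r) (hε : 2 * r < ε₁)
    (t : ℂ) (ht : ‖t‖ = r ^ 2)
    (f g : ℂ → ℂ) (hf : ContDiff ℝ 1 f) (hg : ContDiff ℝ 1 g) (hfg : f 0 = g 0)
    (χ : ℝ → ℝ) (hχ_smooth : ContDiff ℝ (⊤ : ℕ∞) χ)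
    (hχ' : ∀ s : ℝ, 0 ≤ deriv χ s ∧ deriv χ s ≤ 1)
    (hχ0 : ∀ s : ℝ, s ≤ 1 → χ s = 0) (hχ1 : ∀ s : ℝ, 4 ≤ s → χ s = 1)
    (h : ℂ → ℂ)
    (hh₁ : ∀ z : ℂ, r ≤ ‖z‖ → ‖z‖ < ε₁ →
      h z = f ((χ ((‖z‖ / r) ^ 2)) • z))
    (hh₂ : ∀ z : ℂ, r ^ 2 / ε₁ < ‖z‖ → ‖z‖ ≤ r →
      h z = g ((χ ((r / ‖z‖) ^ 2)) • (t / z))) :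
    (⨆ z ∈ {z : ℂ | r / 2 ≤ ‖z‖ ∧ ‖z‖ ≤ 2 * r},
        ‖h z‖)
      = max (⨆ w ∈ closedBall (0 : ℂ) (2 * r), ‖f w‖)
            (⨆ w ∈ closedBall (0 : ℂ) (2 * r), ‖g w‖) ∧
    (∀ z : ℂ, r / 2 ≤ ‖z‖ → ‖z‖ ≤ 2 * r →
      ‖fderiv ℝ h z‖ ≤ 9 * Real.sqrt 2 *
        max (⨆ w ∈ closedBall (0 : ℂ) (2 * r), ‖fderiv ℝ f w‖)
            (4 * ⨆ w ∈ closedBall (0 : ℂ) (2 * r), ‖fderiv ℝ g w‖)) := by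
  have hr2 : (0:ℝ) < r^2 := by positivity
  have hε₁pos : (0:ℝ) < ε₁ := by linarith
  have hle1 : r^2/ε₁ < r/2 := by rw [div_lt_iff₀ hε₁pos]; nlinarith
  have ht0 : t ≠ 0 := by
    intro h0
    rw [h0, norm_zero] at ht
    exact absurd ht.symm (ne_of_gt hr2)
  -- χ facts
  have hχdiff : Differentiable ℝ χ := hχ_smooth.differentiable (by simp)
  have hχmono : Monotone χ := monotone_of_deriv_nonneg hχdiff fun s => (hχ' s).1
  have hχone : χ 1 = 0 := hχ0 1 le_rfl
  have hχ4 : χ 4 = 1 := hχ1 4 le_rfl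
  have hχnn : ∀ s, 0 ≤ χ s := by
    intro s
    rcases le_total s 1 with hs | hs
    · rw [hχ0 s hs]
    · rw [← hχone]; exact hχmono hs
  have hχle : ∀ s, χ s ≤ 1 := by
    intro s
    rcases le_total s 4 with hs | hs
    · rw [← hχ4]; exact hχmono hs
    · rw [hχ1 s hs]
  have hderiv0 : ∀ s ≤ (1:ℝ), deriv χ s = 0 := by
    have hlt : ∀ s < (1:ℝ), deriv χ s = 0 := by
      intro s hs
      have he : χ =ᶠ[nhds s] fun _ => 0 := by
        filter_upwards [Iio_mem_nhds hs] with y hy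
        exact hχ0 y (le_of_lt hy)
      rw [he.deriv_eq, deriv_const]
    intro s hs
    rcases lt_or_eq_of_le hs with hs' | hs'
    · exact hlt s hs'
    · subst hs'
      have hcont : Continuous (deriv χ) := hχ_smooth.continuous_deriv (by simp)
      have h1 : Filter.Tendsto (deriv χ) (nhdsWithin 1 (Set.Iio 1)) (nhds (deriv χ 1)) :=
        (hcont.tendsto 1).mono_left nhdsWithin_le_nhds
      have h2 : Filter.Tendsto (deriv χ) (nhdsWithin 1 (Set.Iio 1)) (nhds 0) := by
        apply Filter.Tendsto.congr' _ tendsto_const_nhds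
        filter_upwards [self_mem_nhdsWithin] with y hy
        exact (hlt y hy).symm
      exact tendsto_nhds_unique h1 h2
  -- the two pieces
  set φ : ℂ → ℂ := fun x => χ (‖x‖^2/r^2) • x with hφdef
  set ψ : ℂ → ℂ := fun x => χ (r^2/‖x‖^2) • (t/x) with hψdef
  have habs1 : ∀ z : ℂ, (‖z‖ / r)^2 = ‖z‖^2/r^2 := fun z => by
    rw [div_pow]
  have habs2 : ∀ z : ℂ, (r / ‖z‖)^2 = r^2/‖z‖^2 := fun z => by
    rw [div_pow]
  have hh₁' : ∀ z : ℂ, r ≤ ‖z‖ → ‖z‖ < ε₁ → h z = f (φ z) := by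
    intro z h1 h2
    rw [hh₁ z h1 h2, hφdef, habs1 z]
  have hh₂' : ∀ z : ℂ, r^2/ε₁ < ‖z‖ → ‖z‖ ≤ r → h z = g (ψ z) := by
    intro z h1 h2
    rw [hh₂ z h1 h2, hψdef, habs2 z]
  have hφnorm : ∀ x : ℂ, ‖φ x‖ ≤ ‖x‖ := by
    intro x
    rw [hφdef]
    simp only []
    rw [norm_smul, Real.norm_eq_abs, abs_of_nonneg (hχnn _)]
    exact mul_le_of_le_one_left (norm_nonneg x) (hχle _)
  have htnorm : ‖t‖ = r^2 := by rw [ht]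
  have hψnorm : ∀ x : ℂ, r/2 ≤ ‖x‖ → ‖ψ x‖ ≤ 2*r := by
    intro x hx
    have hx0 : (0:ℝ) < ‖x‖ := lt_of_lt_of_le (by linarith) hx
    rw [hψdef]
    simp only []
    rw [norm_smul, Real.norm_eq_abs, abs_of_nonneg (hχnn _), norm_div, htnorm]
    have h2 : r^2/‖x‖ ≤ 2*r := by rw [div_le_iff₀ hx0]; nlinarith
    calc χ (r^2/‖x‖^2) * (r^2/‖x‖) ≤ 1 * (2*r) :=
          mul_le_mul (hχle _) h2 (by positivity) zero_le_one
      _ = 2*r := one_mul _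
  -- compactness bounds
  obtain ⟨Cf, hCf⟩ : ∃ C, ∀ w ∈ closedBall (0:ℂ) (2*r), ‖f w‖ ≤ C := by
    obtain ⟨C, hC⟩ := (isCompact_closedBall (0:ℂ) (2*r)).exists_bound_of_continuousOn
      hf.continuous.continuousOn
    exact ⟨C, fun w hw => by exact hC w hw⟩
  obtain ⟨Cg, hCg⟩ : ∃ C, ∀ w ∈ closedBall (0:ℂ) (2*r), ‖g w‖ ≤ C := by
    obtain ⟨C, hC⟩ := (isCompact_closedBall (0:ℂ) (2*r)).exists_bound_of_continuousOn
      hg.continuous.continuousOn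
    exact ⟨C, fun w hw => by exact hC w hw⟩
  obtain ⟨Cf', hCf'⟩ : ∃ C, ∀ w ∈ closedBall (0:ℂ) (2*r), ‖fderiv ℝ f w‖ ≤ C :=
    (isCompact_closedBall (0:ℂ) (2*r)).exists_bound_of_continuousOn
      ((hf.continuous_fderiv one_ne_zero).continuousOn)
  obtain ⟨Cg', hCg'⟩ : ∃ C, ∀ w ∈ closedBall (0:ℂ) (2*r), ‖fderiv ℝ g w‖ ≤ C :=
    (isCompact_closedBall (0:ℂ) (2*r)).exists_bound_of_continuousOn
      ((hg.continuous_fderiv one_ne_zero).continuousOn)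
  have hφmem : ∀ z : ℂ, ‖z‖ ≤ 2*r → φ z ∈ closedBall (0:ℂ) (2*r) := by
    intro z hz
    rw [mem_closedBall_iff_norm, sub_zero]
    exact (hφnorm z).trans (by exact hz)
  have hψmem : ∀ z : ℂ, r/2 ≤ ‖z‖ → ψ z ∈ closedBall (0:ℂ) (2*r) := by
    intro z hz
    rw [mem_closedBall_iff_norm, sub_zero]
    exact hψnorm z (by exact hz)
  -- case analysis for values of h on the annulus
  have hcase : ∀ z ∈ {z : ℂ | r / 2 ≤ ‖z‖ ∧ ‖z‖ ≤ 2 * r},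
      (∃ w ∈ closedBall (0:ℂ) (2*r), h z = f w) ∨
      (∃ w ∈ closedBall (0:ℂ) (2*r), h z = g w) := by
    rintro z ⟨hz1, hz2⟩
    rcases le_or_gt r (‖z‖) with hzr | hzr
    · exact Or.inl ⟨φ z, hφmem z hz2, hh₁' z hzr (lt_of_le_of_lt hz2 hε)⟩
    · exact Or.inr ⟨ψ z, hψmem z hz1, hh₂' z (lt_of_lt_of_le hle1 hz1) hzr.le⟩
    -- surjectivity onto f-values
  have habsr : ‖(r:ℂ)‖ = r := by rw [Complex.norm_real, Real.norm_eq_abs, abs_of_pos hr]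
  have hsurf : ∀ w ∈ closedBall (0:ℂ) (2*r), ∃ z ∈ {z : ℂ | r / 2 ≤ ‖z‖ ∧
      ‖z‖ ≤ 2 * r}, h z = f w := by
    intro w hw
    have hw2r : ‖w‖ ≤ 2*r := by rw [← sub_zero w, ← mem_closedBall_iff_norm]; exact hw
    by_cases hw0 : w = 0
    · refine ⟨(r:ℂ), ⟨by rw [habsr]; linarith, by rw [habsr]; linarith⟩, ?_⟩
      rw [hh₁ (r:ℂ) (by rw [habsr]) (by rw [habsr]; linarith), habsr, div_self hr.ne',
        one_pow, hχone, hw0, zero_smul]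
    · have hwpos : (0:ℝ) < ‖w‖ := norm_pos_iff.2 hw0
      have hmc : ContinuousOn (fun ρ : ℝ => χ ((ρ/r)^2) * ρ) (Set.Icc r (2*r)) := by
        apply ContinuousOn.mul _ continuousOn_id
        exact (hχ_smooth.continuous.comp ((continuous_id.div_const r).pow 2)).continuousOn
      have hmem : ‖w‖ ∈ Set.Icc ((fun ρ : ℝ => χ ((ρ/r)^2) * ρ) r)
          ((fun ρ : ℝ => χ ((ρ/r)^2) * ρ) (2*r)) := by
        simp only []
        rw [div_self hr.ne', one_pow, hχone, zero_mul]
        have h4 : ((2*r/r):ℝ)^2 = 4 := by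
          rw [mul_div_assoc, div_self hr.ne']; norm_num
        rw [h4, hχ4, one_mul]
        exact ⟨norm_nonneg w, hw2r⟩
      obtain ⟨ρ, hρI, hρ⟩ := intermediate_value_Icc (by linarith : r ≤ 2*r) hmc hmem
      simp only [] at hρ
      have hρpos : 0 < ρ := lt_of_lt_of_le hr hρI.1
      have hzabs : ‖((((ρ/‖w‖ : ℝ)) : ℂ) * w)‖ = ρ := by
        rw [norm_mul, Complex.norm_real, Real.norm_eq_abs, abs_of_pos (div_pos hρpos hwpos),
          div_mul_cancel₀ _ hwpos.ne']
      refine ⟨(((ρ/‖w‖ : ℝ)) : ℂ) * w, ⟨by rw [hzabs]; linarith [hρI.1], by rw [hzabs]; exact hρI.2⟩, ?_⟩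
      rw [hh₁ _ (by rw [hzabs]; exact hρI.1) (by rw [hzabs]; linarith [hρI.2]), hzabs]
      congr 1
      rw [Complex.real_smul, ← mul_assoc, ← Complex.ofReal_mul, ← mul_div_assoc, hρ,
        div_self hwpos.ne', Complex.ofReal_one, one_mul]
  -- surjectivity onto g-values
  have hsurg : ∀ w ∈ closedBall (0:ℂ) (2*r), ∃ z ∈ {z : ℂ | r / 2 ≤ ‖z‖ ∧
      ‖z‖ ≤ 2 * r}, h z = g w := by
    intro w hw
    have hw2r : ‖w‖ ≤ 2*r := by rw [← sub_zero w, ← mem_closedBall_iff_norm]; exact hw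
    by_cases hw0 : w = 0
    · refine ⟨(r:ℂ), ⟨by rw [habsr]; linarith, by rw [habsr]; linarith⟩, ?_⟩
      rw [hh₂ (r:ℂ) (by rw [habsr]; linarith) (by rw [habsr]), habsr, div_self hr.ne',
        one_pow, hχone, hw0, zero_smul]
    · have hwpos : (0:ℝ) < ‖w‖ := norm_pos_iff.2 hw0
      have hmc : ContinuousOn (fun ρ : ℝ => χ ((r/ρ)^2) * (r^2/ρ)) (Set.Icc (r/2) r) := by
        have hne : ∀ x ∈ Set.Icc (r/2) r, x ≠ 0 :=
          fun x hx => ne_of_gt (lt_of_lt_of_le (by linarith) hx.1)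
        apply ContinuousOn.mul
        · exact hχ_smooth.continuous.comp_continuousOn
            (((continuousOn_const.div continuousOn_id hne)).pow 2)
        · exact continuousOn_const.div continuousOn_id hne
      have hmem : ‖w‖ ∈ Set.Icc ((fun ρ : ℝ => χ ((r/ρ)^2) * (r^2/ρ)) r)
          ((fun ρ : ℝ => χ ((r/ρ)^2) * (r^2/ρ)) (r/2)) := by
        simp only []
        rw [div_self hr.ne', one_pow, hχone, zero_mul]
        have h4 : ((r/(r/2)):ℝ)^2 = 4 := by
          rw [div_div_eq_mul_div, mul_comm, mul_div_assoc, div_self hr.ne']; norm_num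
        have h5 : r^2/(r/2) = 2*r := by
          field_simp
        rw [h4, hχ4, one_mul, h5]
        exact ⟨norm_nonneg w, hw2r⟩
      obtain ⟨ρ, hρI, hρ⟩ := intermediate_value_Icc' (by linarith : r/2 ≤ r) hmc hmem
      simp only [] at hρ
      have hρpos : 0 < ρ := lt_of_lt_of_le (by linarith) hρI.1
      have hcnn := hχnn ((r/ρ)^2)
      have hcpos : 0 < χ ((r/ρ)^2) := by
        rcases lt_or_eq_of_le hcnn with hc | hc
        · exact hc
        · exfalso; rw [← hc, zero_mul] at hρ; exact hwpos.ne hρ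
      set c : ℝ := χ ((r/ρ)^2) with hcdef
      have hcne : (c:ℂ) ≠ 0 := by exact_mod_cast hcpos.ne'
      have hzabs : ‖((c:ℂ) * (t/w))‖ = ρ := by
        have hwne : ‖w‖ ≠ 0 := hwpos.ne'
        have hkey : c * r^2 = ‖w‖ * ρ := by
          have h' := hρ
          field_simp at h'
          linarith
        have habsw : ‖w‖ ≠ 0 := by exact hwne
        rw [norm_mul, Complex.norm_real, Real.norm_eq_abs, abs_of_pos hcpos, norm_div, ht, mul_div_assoc',
          div_eq_iff habsw]
        linarith
      have hzA : (((c:ℂ) * (t/w)) ∈ {z : ℂ | r / 2 ≤ ‖z‖ ∧ ‖z‖ ≤ 2 * r}) :=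
        ⟨by rw [hzabs]; exact hρI.1, by rw [hzabs]; linarith [hρI.2]⟩
      refine ⟨(c:ℂ) * (t/w), hzA, ?_⟩
      rw [hh₂ _ (by rw [hzabs]; linarith [hρI.1]) (by rw [hzabs]; exact hρI.2), hzabs]
      have htz : t / ((c:ℂ) * (t/w)) = w / (c:ℂ) := by
        field_simp
      rw [htz, Complex.real_smul, ← hcdef, mul_comm, div_mul_cancel₀ _ hcne]
  set Sf := ⨆ w ∈ closedBall (0:ℂ) (2*r), ‖f w‖ with hSfdef
  set Sg := ⨆ w ∈ closedBall (0:ℂ) (2*r), ‖g w‖ with hSgdef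
  have hSf0 : 0 ≤ Sf := biSup_nonneg_aux fun w => norm_nonneg _
  have habsnn : ∀ z : ℂ, 0 ≤ ‖h z‖ := fun z => norm_nonneg _
  have hhle : ∀ z ∈ {z : ℂ | r / 2 ≤ ‖z‖ ∧ ‖z‖ ≤ 2 * r},
      ‖h z‖ ≤ max Sf Sg := by
    intro z hz
    rcases hcase z hz with ⟨w, hw, he⟩ | ⟨w, hw, he⟩
    · rw [he]; exact le_trans (le_biSup_aux hCf hw) (le_max_left _ _)
    · rw [he]; exact le_trans (le_biSup_aux hCg hw) (le_max_right _ _)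
  have hhleC : ∀ z ∈ {z : ℂ | r / 2 ≤ ‖z‖ ∧ ‖z‖ ≤ 2 * r},
      ‖h z‖ ≤ max Cf Cg := by
    intro z hz
    rcases hcase z hz with ⟨w, hw, he⟩ | ⟨w, hw, he⟩
    · rw [he]; exact le_trans (hCf w hw) (le_max_left _ _)
    · rw [he]; exact le_trans (hCg w hw) (le_max_right _ _)
  constructor
  · apply le_antisymm
    · exact biSup_le_aux (le_trans hSf0 (le_max_left _ _)) hhle
    · apply max_le
      · rw [hSfdef]
        apply biSup_le_aux (biSup_nonneg_aux habsnn)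
        intro w hw
        obtain ⟨z, hz, he⟩ := hsurf w hw
        rw [← he]
        exact le_biSup_aux hhleC hz
      · rw [hSgdef]
        apply biSup_le_aux (biSup_nonneg_aux habsnn)
        intro w hw
        obtain ⟨z, hz, he⟩ := hsurg w hw
        rw [← he]
        exact le_biSup_aux hhleC hz
  -- Part 2
  have hnormsq : ∀ z : ℂ, HasFDerivAt (fun x : ℂ => ‖x‖^2) (2 • (innerSL ℝ z)) z :=
    fun z => (hasStrictFDerivAt_norm_sq z).hasFDerivAt
  have hSnorm : ∀ z : ℂ, ‖(2 • (innerSL ℝ z) : ℂ →L[ℝ] ℝ)‖ ≤ 2 * ‖z‖ := by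
    intro z
    rw [two_smul]
    calc ‖innerSL ℝ z + innerSL ℝ z‖ ≤ ‖innerSL ℝ z‖ + ‖innerSL ℝ z‖ := norm_add_le _ _
      _ = 2*‖z‖ := by rw [show ‖innerSL ℝ z‖ = ‖z‖ from innerSL_apply_norm (𝕜 := ℝ) z]; ring
  have hφpkg : ∀ z : ℂ, ‖z‖ ≤ 2*r → ∃ L : ℂ →L[ℝ] ℂ,
      HasFDerivAt φ L z ∧ ‖L‖ ≤ 9 ∧ (‖z‖ < r → L = 0) := by
    intro z hz2
    obtain ⟨S, hSd, hSn⟩ : ∃ S : ℂ →L[ℝ] ℝ, HasFDerivAt (fun x : ℂ => ‖x‖^2) S z ∧ ‖S‖ ≤ 2*‖z‖ :=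
      ⟨_, hnormsq z, hSnorm z⟩
    have hqd : HasFDerivAt (fun x : ℂ => ‖x‖^2/r^2) ((r^2)⁻¹ • S) z := by
      have h0 := hSd.const_mul ((r^2)⁻¹)
      have he : (fun x : ℂ => (r^2)⁻¹ * ‖x‖^2) = fun x : ℂ => ‖x‖^2/r^2 := by
        funext x; rw [div_eq_inv_mul]
      rwa [he] at h0
    have hcd : HasFDerivAt (fun x : ℂ => χ (‖x‖^2/r^2))
        ((deriv χ (‖z‖^2/r^2)) • ((r^2)⁻¹ • S)) z := by
      have h0 := ((hχdiff (‖z‖^2/r^2)).hasDerivAt).comp_hasFDerivAt z hqd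
      simpa [Function.comp_def] using h0
    have hLd : HasFDerivAt φ (χ (‖z‖^2/r^2) • ContinuousLinearMap.id ℝ ℂ +
        ((deriv χ (‖z‖^2/r^2)) • ((r^2)⁻¹ • S)).smulRight z) z := by
      rw [hφdef]
      exact hcd.smul (hasFDerivAt_id z)
    refine ⟨_, hLd, ?_, ?_⟩
    · refine (norm_add_le _ _).trans ?_
      have h1 : ‖χ (‖z‖^2/r^2) • ContinuousLinearMap.id ℝ ℂ‖ ≤ 1 := by
        rw [norm_smul (χ (‖z‖^2/r^2)) (ContinuousLinearMap.id ℝ ℂ),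
          Real.norm_eq_abs, abs_of_nonneg (hχnn _)]
        calc χ (‖z‖^2/r^2) * ‖ContinuousLinearMap.id ℝ ℂ‖ ≤ 1 * 1 :=
            mul_le_mul (hχle _) ContinuousLinearMap.norm_id_le (norm_nonneg _) zero_le_one
          _ = 1 := one_mul 1
      have h2 : ‖((deriv χ (‖z‖^2/r^2)) • ((r^2)⁻¹ • S)).smulRight z‖ ≤ 8 := by
        rw [ContinuousLinearMap.norm_smulRight_apply]
        have hd1 : ‖deriv χ (‖z‖^2/r^2)‖ ≤ 1 := by
          rw [Real.norm_eq_abs]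
          exact abs_le.2 ⟨by linarith [(hχ' (‖z‖^2/r^2)).1], (hχ' (‖z‖^2/r^2)).2⟩
        have hin : ‖(r^2)⁻¹ • S‖ ≤ (r^2)⁻¹ * (2*‖z‖) := by
          rw [norm_smul ((r^2)⁻¹) S, Real.norm_eq_abs,
            abs_of_pos (show (0:ℝ) < (r^2)⁻¹ by positivity)]
          exact mul_le_mul_of_nonneg_left hSn (by positivity)
        have houter : ‖deriv χ (‖z‖^2/r^2) • ((r^2)⁻¹ • S)‖ ≤ (r^2)⁻¹ * (2*‖z‖) := by
          rw [norm_smul (deriv χ (‖z‖^2/r^2)) ((r^2)⁻¹ • S)]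
          nlinarith [norm_nonneg ((r^2)⁻¹ • S), hd1, hin, norm_nonneg (deriv χ (‖z‖^2/r^2))]
        have hz0 : (0:ℝ) ≤ ‖z‖ := norm_nonneg z
        have hfin : (r^2)⁻¹ * (2*‖z‖) * ‖z‖ ≤ 8 := by
          have h1' : 2*‖z‖*‖z‖ ≤ 8 * r^2 := by nlinarith
          calc (r^2)⁻¹ * (2*‖z‖) * ‖z‖ = (r^2)⁻¹ * (2*‖z‖*‖z‖) := by ring
            _ ≤ (r^2)⁻¹ * (8*r^2) := mul_le_mul_of_nonneg_left h1' (by positivity)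
            _ = 8 := by field_simp
        nlinarith [houter, hz0, hfin, norm_nonneg (deriv χ (‖z‖^2/r^2) • ((r^2)⁻¹ • S))]
      linarith
    · intro hlt
      have hs1 : ‖z‖^2/r^2 ≤ 1 := by
        rw [div_le_one hr2]
        nlinarith [norm_nonneg z]
      have hc00 := hχ0 _ hs1
      have hd00 := hderiv0 _ hs1
      ext w
      simp [hχ0 _ hs1, hderiv0 _ hs1, hc00, hd00]
  have hψpkg : ∀ z : ℂ, z ≠ 0 → r/2 ≤ ‖z‖ → ∃ M : ℂ →L[ℝ] ℂ,
      HasFDerivAt ψ M z ∧ ‖M‖ ≤ 36 ∧ (r ≤ ‖z‖ → M = 0) := by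
    intro z hz0 hz1
    have hzpos : (0:ℝ) < ‖z‖ := lt_of_lt_of_le (by linarith) hz1
    have hn2 : ‖z‖^2 ≠ 0 := by positivity
    obtain ⟨S, hSd, hSn⟩ : ∃ S : ℂ →L[ℝ] ℝ, HasFDerivAt (fun x : ℂ => ‖x‖^2) S z ∧ ‖S‖ ≤ 2*‖z‖ :=
      ⟨_, hnormsq z, hSnorm z⟩
    have hpd : HasFDerivAt (fun x : ℂ => r^2/‖x‖^2) ((r^2) • ((-((‖z‖^2)^2)⁻¹) • S)) z := by
      have hinv : HasFDerivAt (fun x : ℂ => (‖x‖^2)⁻¹) ((-((‖z‖^2)^2)⁻¹) • S) z := by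
        have h0 := (hasDerivAt_inv hn2).comp_hasFDerivAt z hSd
        exact h0
      have h0 := hinv.const_mul (r^2)
      have he : (fun x : ℂ => r^2 * (‖x‖^2)⁻¹) = fun x : ℂ => r^2/‖x‖^2 := by
        funext x; rw [div_eq_mul_inv]
      rwa [he] at h0
    have hcd : HasFDerivAt (fun x : ℂ => χ (r^2/‖x‖^2))
        ((deriv χ (r^2/‖z‖^2)) • ((r^2) • ((-((‖z‖^2)^2)⁻¹) • S))) z := by
      have h0 := ((hχdiff (r^2/‖z‖^2)).hasDerivAt).comp_hasFDerivAt z hpd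
      simpa [Function.comp_def] using h0
    obtain ⟨V, hVd, hVn⟩ : ∃ V : ℂ →L[ℝ] ℂ, HasFDerivAt (fun x : ℂ => t/x) V z ∧
        ‖V‖ = r^2/‖z‖^2 := by
      refine ⟨(ContinuousLinearMap.smulRight (1 : ℂ →L[ℂ] ℂ) (t * (-(z^2)⁻¹))).restrictScalars ℝ,
        ?_, ?_⟩
      · have h1 : HasDerivAt (fun x : ℂ => t * x⁻¹) (t * (-(z^2)⁻¹)) z :=
          (hasDerivAt_inv hz0).const_mul t
        have h2 := (h1.hasFDerivAt).restrictScalars ℝ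
        have he : (fun x : ℂ => t * x⁻¹) = fun x : ℂ => t/x := by
          funext x; rw [div_eq_mul_inv]
        rwa [he] at h2
      · rw [ContinuousLinearMap.norm_restrictScalars, ContinuousLinearMap.norm_smulRight_apply,
          norm_mul, norm_neg, norm_inv, norm_pow, htnorm]
        simp [div_eq_mul_inv]
    have hMd : HasFDerivAt ψ (χ (r^2/‖z‖^2) • V +
        ((deriv χ (r^2/‖z‖^2)) • ((r^2) • ((-((‖z‖^2)^2)⁻¹) • S))).smulRight (t/z)) z := by
      rw [hψdef]
      exact hcd.smul hVd
    refine ⟨_, hMd, ?_, ?_⟩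
    · refine (norm_add_le _ _).trans ?_
      have h1 : ‖χ (r^2/‖z‖^2) • V‖ ≤ 4 := by
        rw [norm_smul (χ (r^2/‖z‖^2)) V, Real.norm_eq_abs, abs_of_nonneg (hχnn _), hVn]
        have h4 : r^2/‖z‖^2 ≤ 4 := by
          rw [div_le_iff₀ (by positivity)]
          nlinarith
        calc χ (r^2/‖z‖^2) * (r^2/‖z‖^2) ≤ 1 * 4 :=
            mul_le_mul (hχle _) h4 (by positivity) zero_le_one
          _ = 4 := one_mul 4
      have h2 : ‖((deriv χ (r^2/‖z‖^2)) • ((r^2) • ((-((‖z‖^2)^2)⁻¹) • S))).smulRight (t/z)‖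
          ≤ 32 := by
        rw [ContinuousLinearMap.norm_smulRight_apply]
        have hd1 : ‖deriv χ (r^2/‖z‖^2)‖ ≤ 1 := by
          rw [Real.norm_eq_abs]
          exact abs_le.2 ⟨by linarith [(hχ' (r^2/‖z‖^2)).1], (hχ' (r^2/‖z‖^2)).2⟩
        have hin1 : ‖(-((‖z‖^2)^2)⁻¹ : ℝ) • S‖ ≤ ((‖z‖^2)^2)⁻¹ * (2*‖z‖) := by
          rw [norm_smul (-((‖z‖^2)^2)⁻¹ : ℝ) S, Real.norm_eq_abs, abs_neg,
            abs_of_pos (show (0:ℝ) < ((‖z‖^2)^2)⁻¹ by positivity)]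
          exact mul_le_mul_of_nonneg_left hSn (by positivity)
        have hin2 : ‖(r^2 : ℝ) • ((-((‖z‖^2)^2)⁻¹ : ℝ) • S)‖ ≤
            r^2 * (((‖z‖^2)^2)⁻¹ * (2*‖z‖)) := by
          rw [norm_smul (r^2 : ℝ) ((-((‖z‖^2)^2)⁻¹ : ℝ) • S), Real.norm_eq_abs, abs_of_pos hr2]
          exact mul_le_mul_of_nonneg_left hin1 hr2.le
        have hin3 : ‖(deriv χ (r^2/‖z‖^2)) • ((r^2 : ℝ) • ((-((‖z‖^2)^2)⁻¹ : ℝ) • S))‖ ≤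
            r^2 * (((‖z‖^2)^2)⁻¹ * (2*‖z‖)) := by
          rw [norm_smul (deriv χ (r^2/‖z‖^2)) ((r^2 : ℝ) • ((-((‖z‖^2)^2)⁻¹ : ℝ) • S))]
          nlinarith [hd1, hin2, norm_nonneg ((r^2 : ℝ) • ((-((‖z‖^2)^2)⁻¹ : ℝ) • S)),
            norm_nonneg (deriv χ (r^2/‖z‖^2)),
            mul_nonneg hr2.le (mul_nonneg (show (0:ℝ) ≤ ((‖z‖^2)^2)⁻¹ by positivity)
              (by linarith [norm_nonneg z] : (0:ℝ) ≤ 2*‖z‖))]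
        have htz' : ‖t/z‖ = r^2/‖z‖ := by rw [norm_div, htnorm]
        have hzne' : ‖z‖ ≠ 0 := ne_of_gt hzpos
        have habsne : ‖z‖ ≠ 0 := by exact hzne'
        have key : r^2 * (((‖z‖^2)^2)⁻¹ * (2*‖z‖)) * (r^2/‖z‖) ≤ 32 := by
          have step2 : r^2 * (((‖z‖^2)^2)⁻¹ * (2*‖z‖)) * (r^2/‖z‖) = 2*r^4/‖z‖^4 := by
            field_simp
          have step3 : 2*r^4/‖z‖^4 ≤ 32 := by
            rw [div_le_iff₀ (by positivity)]
            have hp := pow_le_pow_left₀ hr.le (show r ≤ 2*‖z‖ by linarith) 4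
            have h16 : (2*‖z‖)^4 = 16*‖z‖^4 := by ring
            linarith
          linarith [step2.le, step2.ge]
        rw [htz']
        nlinarith [hin3, key, (show (0:ℝ) ≤ r^2/‖z‖ by positivity),
          norm_nonneg ((deriv χ (r^2/‖z‖^2)) • ((r^2 : ℝ) • ((-((‖z‖^2)^2)⁻¹ : ℝ) • S)))]
      linarith
    · intro hge
      have hs1 : r^2/‖z‖^2 ≤ 1 := by
        rw [div_le_one (by positivity)]
        nlinarith
      have hc00 := hχ0 _ hs1
      have hd00 := hderiv0 _ hs1
      ext w
      simp [hχ0 _ hs1, hderiv0 _ hs1, hc00, hd00]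
  intro z hz1 hz2
  have hzne : z ≠ 0 := by
    intro h0
    rw [h0, norm_zero] at hz1
    linarith
  obtain ⟨L, hL, hL9, hL0⟩ := hφpkg z hz2
  obtain ⟨M, hM, hM36, hM0⟩ := hψpkg z hzne hz1
  have hopen : IsOpen {y : ℂ | r^2/ε₁ < ‖y‖ ∧ ‖y‖ < ε₁} := by
    rw [Set.setOf_and]
    exact (isOpen_lt continuous_const continuous_norm).inter
      (isOpen_lt continuous_norm continuous_const)
  have hev : h =ᶠ[nhds z] fun y => f (φ y) + g (ψ y) - f 0 := by
    filter_upwards [hopen.mem_nhds ⟨lt_of_lt_of_le hle1 hz1, lt_of_le_of_lt hz2 hε⟩] with y hy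
    obtain ⟨hy1, hy2⟩ := hy
    have hy0 : (0:ℝ) < ‖y‖ := by
      have := div_pos hr2 hε₁pos
      linarith
    rcases le_or_gt r (‖y‖) with hyr | hyr
    · rw [hh₁' y hyr hy2]
      have hψ0 : ψ y = 0 := by
        rw [hψdef]
        simp only []
        rw [hχ0 _ (by
          rw [div_le_one (by positivity)]
          nlinarith), zero_smul]
      rw [hψ0, ← hfg, add_sub_cancel_right]
    · rw [hh₂' y hy1 hyr.le]
      have hφ0 : φ y = 0 := by
        rw [hφdef]
        simp only []
        rw [hχ0 _ (by
          rw [div_le_one hr2]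
          nlinarith [norm_nonneg y]), zero_smul]
      rw [hφ0, hfg, add_sub_cancel_left]
  have hfd : HasFDerivAt f (fderiv ℝ f (φ z)) (φ z) := (hf.differentiable one_ne_zero (φ z)).hasFDerivAt
  have hgd : HasFDerivAt g (fderiv ℝ g (ψ z)) (ψ z) := (hg.differentiable one_ne_zero (ψ z)).hasFDerivAt
  have hHd : HasFDerivAt (fun y => f (φ y) + g (ψ y) - f 0)
      ((fderiv ℝ f (φ z)).comp L + (fderiv ℝ g (ψ z)).comp M) z :=
    ((hfd.comp z hL).add (hgd.comp z hM)).sub_const (f 0)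
  have hfe : fderiv ℝ h z = (fderiv ℝ f (φ z)).comp L + (fderiv ℝ g (ψ z)).comp M := by
    rw [hev.fderiv_eq]
    exact hHd.fderiv
  rw [hfe]
  have hMf0 : 0 ≤ ⨆ w ∈ closedBall (0:ℂ) (2*r), ‖fderiv ℝ f w‖ :=
    biSup_nonneg_aux fun w => norm_nonneg _
  have hMg0 : 0 ≤ ⨆ w ∈ closedBall (0:ℂ) (2*r), ‖fderiv ℝ g w‖ :=
    biSup_nonneg_aux fun w => norm_nonneg _
  have hmax0 : 0 ≤ max (⨆ w ∈ closedBall (0:ℂ) (2*r), ‖fderiv ℝ f w‖)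
      (4 * ⨆ w ∈ closedBall (0:ℂ) (2*r), ‖fderiv ℝ g w‖) := le_trans hMf0 (le_max_left _ _)
  have hfb : ‖fderiv ℝ f (φ z)‖ ≤ ⨆ w ∈ closedBall (0:ℂ) (2*r), ‖fderiv ℝ f w‖ :=
    le_biSup_aux hCf' (hφmem z hz2)
  have hgb : ‖fderiv ℝ g (ψ z)‖ ≤ ⨆ w ∈ closedBall (0:ℂ) (2*r), ‖fderiv ℝ g w‖ :=
    le_biSup_aux hCg' (hψmem z hz1)
  have hsqrt : (1:ℝ) ≤ Real.sqrt 2 := by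
    rw [show (1:ℝ) = Real.sqrt 1 by simp]
    exact Real.sqrt_le_sqrt (by norm_num)
  rcases le_or_gt r (‖z‖) with hc | hc
  · rw [hM0 hc]
    have hcz : (fderiv ℝ g (ψ z)).comp (0 : ℂ →L[ℝ] ℂ) = 0 := by ext w; simp
    rw [hcz, add_zero]
    calc ‖(fderiv ℝ f (φ z)).comp L‖ ≤ ‖fderiv ℝ f (φ z)‖ * ‖L‖ :=
        ContinuousLinearMap.opNorm_comp_le _ _
      _ ≤ (⨆ w ∈ closedBall (0:ℂ) (2*r), ‖fderiv ℝ f w‖) * 9 :=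
        mul_le_mul hfb hL9 (norm_nonneg _) hMf0
      _ ≤ 9 * Real.sqrt 2 * max (⨆ w ∈ closedBall (0:ℂ) (2*r), ‖fderiv ℝ f w‖)
          (4 * ⨆ w ∈ closedBall (0:ℂ) (2*r), ‖fderiv ℝ g w‖) := by
        have hle' : (⨆ w ∈ closedBall (0:ℂ) (2*r), ‖fderiv ℝ f w‖) ≤
            max (⨆ w ∈ closedBall (0:ℂ) (2*r), ‖fderiv ℝ f w‖)
            (4 * ⨆ w ∈ closedBall (0:ℂ) (2*r), ‖fderiv ℝ g w‖) := le_max_left _ _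
        nlinarith [mul_le_mul_of_nonneg_right hsqrt hmax0]
  · rw [hL0 hc]
    have hcz : (fderiv ℝ f (φ z)).comp (0 : ℂ →L[ℝ] ℂ) = 0 := by ext w; simp
    rw [hcz, zero_add]
    calc ‖(fderiv ℝ g (ψ z)).comp M‖ ≤ ‖fderiv ℝ g (ψ z)‖ * ‖M‖ :=
        ContinuousLinearMap.opNorm_comp_le _ _
      _ ≤ (⨆ w ∈ closedBall (0:ℂ) (2*r), ‖fderiv ℝ g w‖) * 36 :=
        mul_le_mul hgb hM36 (norm_nonneg _) hMg0
      _ ≤ 9 * Real.sqrt 2 * max (⨆ w ∈ closedBall (0:ℂ) (2*r), ‖fderiv ℝ f w‖)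
          (4 * ⨆ w ∈ closedBall (0:ℂ) (2*r), ‖fderiv ℝ g w‖) := by
        have hle' : 4 * (⨆ w ∈ closedBall (0:ℂ) (2*r), ‖fderiv ℝ g w‖) ≤
            max (⨆ w ∈ closedBall (0:ℂ) (2*r), ‖fderiv ℝ f w‖)
            (4 * ⨆ w ∈ closedBall (0:ℂ) (2*r), ‖fderiv ℝ g w‖) := le_max_right _ _
        nlinarith [mul_le_mul_of_nonneg_right hsqrt hmax0]
end
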